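/- arXiv:1708.06166 — 8 statements merged into one kernel-verified Lean document; each statement's English description precedes it below -/
import Mathlib

section
/- Suppose λ > 0 satisfies λ · (max_i Σ_{j≠i} w_{ij}) < 1. Then for every z ∈ ℂⁿ, the function x ↦ D_{λ,W}(x; z) = (1/2)‖z − x‖₂² + λ·P_W(x) is strictly convex on ℂⁿ (viewed as ℝ²ⁿ). -/
/-!
Put `m = a • x + b • y` and `dᵢ = ‖xᵢ - yᵢ‖`. The quadratic term falls short of its chord by
exactly `(a b / 2) ‖d‖²`, while the penalty exceeds its chord by at most `(λ a b / 2) dᵀ W d`,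
since `‖mᵢ‖ ≤ a ‖xᵢ‖ + b ‖yᵢ‖` and `|‖xᵢ‖ - ‖yᵢ‖| ≤ dᵢ`. For symmetric nonnegative `W` the form
`dᵀ W d` is at most the largest row sum times `‖d‖²`, so `λ · max row sum < 1` leaves a strict
gain whenever `x ≠ y`.
-/

open Finset

lemma norm_smul_add_smul_sq {E : Type*} [NormedAddCommGroup E] [InnerProductSpace ℝ E]
    {a b : ℝ} (hab : a + b = 1) (u v : E) :
    ‖a • u + b • v‖ ^ 2 = a * ‖u‖ ^ 2 + b * ‖v‖ ^ 2 - a * b * ‖u - v‖ ^ 2 := by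
  rw [norm_add_sq_real, norm_sub_sq_real, norm_smul, norm_smul, real_inner_smul_left,
    real_inner_smul_right, mul_pow, mul_pow, Real.norm_eq_abs, Real.norm_eq_abs, sq_abs, sq_abs]
  obtain rfl := eq_sub_of_add_eq hab
  ring

lemma add_mul_add_le_of_abs_sub_le {a b p q p' q' d d' : ℝ} (ha : 0 ≤ a) (hb : 0 ≤ b)
    (hab : a + b = 1) (h : |p - q| ≤ d) (h' : |p' - q'| ≤ d') :
    (a * p + b * q) * (a * p' + b * q') ≤ a * (p * p') + b * (q * q') + a * b * (d * d') := by
  have hprod : -((p - q) * (p' - q')) ≤ d * d' :=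
    calc -((p - q) * (p' - q')) ≤ |p - q| * |p' - q'| := by rw [← abs_mul]; exact neg_le_abs _
      _ ≤ d * d' := mul_le_mul h h' (abs_nonneg _) ((abs_nonneg _).trans h)
  obtain rfl := eq_sub_of_add_eq hab
  nlinarith [mul_nonneg ha hb]

section

variable {ι : Type*} [Fintype ι]

lemma sum_norm_sub_smul_add_smul_sq (z x y : ι → ℂ) {a b : ℝ} (hab : a + b = 1) :
    ∑ i, ‖z i - (a • x + b • y) i‖ ^ 2
      = a * ∑ i, ‖z i - x i‖ ^ 2 + b * ∑ i, ‖z i - y i‖ ^ 2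
        - a * b * ∑ i, ‖x i - y i‖ ^ 2 := by
  have hsplit : ∀ i, z i - (a • x + b • y) i = a • (z i - x i) + b • (z i - y i) := fun i => by
    simp only [Pi.add_apply, Pi.smul_apply]
    linear_combination (norm := module) -(hab • z i)
  simp only [hsplit, norm_smul_add_smul_sq hab, sub_sub_sub_cancel_left, norm_sub_rev (y _),
    sum_sub_distrib, sum_add_distrib, mul_sum]

lemma sum_sum_mul_mul_le_of_forall_sum_le {W : Matrix ι ι ℝ} {M : ℝ} (hsymm : ∀ i j, W i j = W j i)
    (hW : ∀ i j, 0 ≤ W i j) (hrow : ∀ i, ∑ j, W i j ≤ M) (d : ι → ℝ) :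
    ∑ i, ∑ j, W i j * (d i * d j) ≤ M * ∑ i, d i ^ 2 := by
  have hswap : ∑ i, ∑ j, W i j * d j ^ 2 = ∑ i, ∑ j, W i j * d i ^ 2 := by
    rw [sum_comm]; simp only [hsymm]
  calc ∑ i, ∑ j, W i j * (d i * d j) ≤ ∑ i, ∑ j, W i j * ((d i ^ 2 + d j ^ 2) / 2) := by
        gcongr with i _ j _
        · exact hW i j
        · nlinarith [sq_nonneg (d i - d j)]
    _ = ∑ i, (∑ j, W i j) * d i ^ 2 := by
        simp only [mul_div_assoc', mul_add, add_div, sum_add_distrib, ← sum_div, hswap, sum_mul]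
        ring
    _ ≤ ∑ i, M * d i ^ 2 := by gcongr with i; exact hrow i
    _ = M * ∑ i, d i ^ 2 := (mul_sum ..).symm

noncomputable def penalty (W : Matrix ι ι ℝ) (x : ι → ℂ) : ℝ :=
  ∑ i, ‖x i‖ + (1 / 2) * ∑ i, ∑ j, W i j * (‖x i‖ * ‖x j‖)

lemma penalty_smul_add_smul_le {W : Matrix ι ι ℝ} (hW : ∀ i j, 0 ≤ W i j) (x y : ι → ℂ)
    {a b : ℝ} (ha : 0 ≤ a) (hb : 0 ≤ b) (hab : a + b = 1) :
    penalty W (a • x + b • y) ≤ a * penalty W x + b * penalty W y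
      + a * b / 2 * ∑ i, ∑ j, W i j * (‖x i - y i‖ * ‖x j - y j‖) := by
  have hnorm : ∀ i, ‖(a • x + b • y) i‖ ≤ a * ‖x i‖ + b * ‖y i‖ := fun i =>
    (norm_add_le _ _).trans_eq (by simp [abs_of_nonneg ha, abs_of_nonneg hb])
  have hlinear := sum_le_sum fun i (_ : i ∈ univ) => hnorm i
  have hquad : ∀ i j, W i j * (‖(a • x + b • y) i‖ * ‖(a • x + b • y) j‖)
      ≤ a * (W i j * (‖x i‖ * ‖x j‖)) + b * (W i j * (‖y i‖ * ‖y j‖))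
        + a * b * (W i j * (‖x i - y i‖ * ‖x j - y j‖)) := fun i j =>
    calc _ ≤ W i j * ((a * ‖x i‖ + b * ‖y i‖) * (a * ‖x j‖ + b * ‖y j‖)) := by
          gcongr
          · exact hW i j
          · exact hnorm i
          · exact hnorm j
      _ ≤ W i j * (a * (‖x i‖ * ‖x j‖) + b * (‖y i‖ * ‖y j‖)
            + a * b * (‖x i - y i‖ * ‖x j - y j‖)) :=
          mul_le_mul_of_nonneg_left (add_mul_add_le_of_abs_sub_le ha hb hab
            (abs_norm_sub_norm_le _ _) (abs_norm_sub_norm_le _ _)) (hW i j)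
      _ = _ := by ring
  have hquad_sum := sum_le_sum fun i (_ : i ∈ univ) => sum_le_sum fun j (_ : j ∈ univ) =>
    hquad i j
  simp only [sum_add_distrib, ← mul_sum] at hlinear hquad_sum
  unfold penalty
  linarith

end

/-- If λ·(max_i Σ_{j≠i} w_{ij}) < 1, then for every z ∈ ℂⁿ the function
x ↦ D_{λ,W}(x;z) = (1/2)‖z−x‖₂² + λ·P_W(x) is strictly convex on ℂⁿ (viewed as ℝ²ⁿ). -/
theorem stmt0 (n : ℕ) (hn : 0 < n) (W : Matrix (Fin n) (Fin n) ℝ)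
    (hsymm : ∀ i j, W i j = W j i) (hnonneg : ∀ i j, 0 ≤ W i j)
    (hdiag : ∀ i, W i i = 0) (lam : ℝ) (hlam : 0 < lam)
    (hbound : lam * (Finset.univ.sup'
        (Finset.univ_nonempty_iff.mpr (Fin.pos_iff_nonempty.mp hn))
        (fun i => ∑ j ∈ Finset.univ.erase i, W i j)) < 1)
    (z : Fin n → ℂ) :
    StrictConvexOn ℝ Set.univ (fun x : Fin n → ℂ =>
      (1 / 2) * ∑ i, ‖z i - x i‖ ^ 2
        + lam * ((∑ i, ‖x i‖)
            + (1 / 2) * ∑ i, ∑ j, W i j * (‖x i‖ * ‖x j‖))) := by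
  obtain ⟨M, hrow, hM⟩ : ∃ M, (∀ i, ∑ j, W i j ≤ M) ∧ lam * M < 1 := ⟨_, fun i => by
    rw [← sum_erase univ (hdiag i)]
    exact le_sup' (fun i => ∑ j ∈ univ.erase i, W i j) (mem_univ i), hbound⟩
  refine ⟨convex_univ, fun x _ y _ hxy a b ha hb hab => ?_⟩
  change (1 / 2) * _ + lam * penalty W _
    < a * ((1 / 2) * _ + lam * penalty W x) + b * ((1 / 2) * _ + lam * penalty W y)
  set d : Fin n → ℝ := fun i => ‖x i - y i‖
  have hd : 0 < ∑ i, d i ^ 2 := by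
    obtain ⟨i, hi⟩ := Function.ne_iff.mp hxy
    exact sum_pos' (fun j _ => sq_nonneg _) ⟨i, mem_univ i, pow_pos (norm_pos_iff.mpr (sub_ne_zero.mpr hi)) 2⟩
  have hcoupling : lam * ∑ i, ∑ j, W i j * (d i * d j) < ∑ i, d i ^ 2 :=
    calc _ ≤ lam * (M * ∑ i, d i ^ 2) := by
          gcongr; exact sum_sum_mul_mul_le_of_forall_sum_le hsymm hnonneg hrow d
      _ < ∑ i, d i ^ 2 := by rw [← mul_assoc]; exact mul_lt_of_lt_one_left hd hM
  rw [sum_norm_sub_smul_add_smul_sq z x y hab]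
  nlinarith [mul_le_mul_of_nonneg_left (penalty_smul_add_smul_le hnonneg x y ha.le hb.le hab)
    hlam.le, mul_lt_mul_of_pos_left hcoupling (mul_pos ha hb)]
end

section
/- Suppose λ > 0 satisfies λ · (max_i Σ_{j≠i} w_{ij}) < 1. Then P_W is (1/λ)-weakly convex, i.e., the function x ↦ (1/(2λ))‖x‖₂² + P_W(x) is convex on ℂⁿ (viewed as ℝ²ⁿ). -/
/-!
With `a i = ‖x i‖` and row sums `S i = ∑ j, W i j`, symmetry of `W` gives
`(1/λ) ∑ a i ^ 2 + ∑ W i j a i a j = ∑ (1/λ - S i) a i ^ 2 + (1/2) ∑ W i j (a i + a j) ^ 2`.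
The bound on `λ` makes every coefficient nonnegative, and each `a i` (hence each `a i + a j`) is a
nonnegative convex function of `x`, so every square on the right is convex.
-/

open Finset

theorem ConvexOn.finset_sum {𝕜 E β ι : Type*} [Semiring 𝕜] [PartialOrder 𝕜] [AddCommMonoid E]
    [AddCommMonoid β] [PartialOrder β] [IsOrderedAddMonoid β] [SMul 𝕜 E] [Module 𝕜 β]
    {s : Set E} {t : Finset ι} {f : ι → E → β} (hs : Convex 𝕜 s)
    (hf : ∀ i ∈ t, ConvexOn 𝕜 s (f i)) :
    ConvexOn 𝕜 s (fun x => ∑ i ∈ t, f i x) := by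
  rw [← Finset.sum_fn]
  exact Finset.sum_induction f (ConvexOn 𝕜 s) (fun _ _ => ConvexOn.add) (convexOn_const 0 hs) hf

theorem sum_sum_mul_add_sq_eq_of_symm {ι R : Type*} [Fintype ι] [CommRing R] {W : ι → ι → R}
    (hW : ∀ i j, W i j = W j i) (a : ι → R) :
    ∑ i, ∑ j, W i j * (a i + a j) ^ 2
      = 2 * ∑ i, (∑ j, W i j) * a i ^ 2 + 2 * ∑ i, ∑ j, W i j * (a i * a j) := by
  have hswap : ∑ i, ∑ j, W i j * a j ^ 2 = ∑ i, ∑ j, W i j * a i ^ 2 := by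
    rw [Finset.sum_comm]
    simp only [hW]
  calc ∑ i, ∑ j, W i j * (a i + a j) ^ 2
      = ∑ i, ∑ j, W i j * a i ^ 2 + ∑ i, ∑ j, W i j * a j ^ 2
          + 2 * ∑ i, ∑ j, W i j * (a i * a j) := by
        simp only [Finset.mul_sum, ← Finset.sum_add_distrib]
        exact Finset.sum_congr rfl fun i _ => Finset.sum_congr rfl fun j _ => by ring
    _ = 2 * ∑ i, (∑ j, W i j) * a i ^ 2 + 2 * ∑ i, ∑ j, W i j * (a i * a j) := by
        simp only [hswap, Finset.sum_mul]
        ring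

theorem ConvexOn.sum_mul_sq_add_sum_sum_mul_of_rowSum_le {ι E : Type*} [Fintype ι]
    [AddCommGroup E] [Module ℝ E] {s : Set E} {f : ι → E → ℝ} {W : ι → ι → ℝ} {d : ι → ℝ}
    (hs : Convex ℝ s) (hf : ∀ i, ConvexOn ℝ s (f i)) (hf₀ : ∀ i, ∀ x ∈ s, 0 ≤ f i x)
    (hW : ∀ i j, W i j = W j i) (hW₀ : ∀ i j, 0 ≤ W i j) (hd : ∀ i, ∑ j, W i j ≤ d i) :
    ConvexOn ℝ s (fun x => ∑ i, d i * f i x ^ 2 + ∑ i, ∑ j, W i j * (f i x * f j x)) := by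
  have hsq : ∀ i, ConvexOn ℝ s (fun x => (d i - ∑ j, W i j) * f i x ^ 2) := fun i =>
    ((hf i).pow (hf₀ i) 2).smul (sub_nonneg.mpr (hd i))
  have hpair : ∀ i j, ConvexOn ℝ s (fun x => (W i j / 2) * (f i x + f j x) ^ 2) := fun i j =>
    (((hf i).add (hf j)).pow (fun x hx => add_nonneg (hf₀ i x hx) (hf₀ j x hx)) 2).smul
      (div_nonneg (hW₀ i j) zero_le_two)
  refine ((ConvexOn.finset_sum (t := univ) hs fun i _ => hsq i).add
    (ConvexOn.finset_sum (t := univ) hs fun i _ =>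
      ConvexOn.finset_sum (t := univ) hs fun j _ => hpair i j)).congr ?_
  intro x _
  simp only [Pi.add_apply, sub_mul, Finset.sum_sub_distrib, div_mul_eq_mul_div, ← Finset.sum_div,
    sum_sum_mul_add_sq_eq_of_symm hW fun i => f i x]
  ring

theorem rowSum_le_inv_of_mul_sup'_lt_one {ι : Type*} [Fintype ι] [DecidableEq ι]
    (hne : (univ : Finset ι).Nonempty) {W : ι → ι → ℝ} (hdiag : ∀ i, W i i = 0)
    {lam : ℝ} (hlam : 0 < lam) (hbound : lam * univ.sup' hne (fun i => ∑ j ∈ univ.erase i, W i j) < 1)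
    (i : ι) :
    ∑ j, W i j ≤ 1 / lam := by
  rw [le_div_iff₀' hlam, ← Finset.sum_erase _ (hdiag i)]
  exact le_of_lt <| lt_of_le_of_lt
    (mul_le_mul_of_nonneg_left (le_sup' (fun i => ∑ j ∈ univ.erase i, W i j) (mem_univ i))
      hlam.le) hbound

/-- If λ·(max_i Σ_{j≠i} w_{ij}) < 1, then P_W is (1/λ)-weakly convex, i.e.
x ↦ (1/(2λ))‖x‖₂² + P_W(x) is convex on ℂⁿ (viewed as ℝ²ⁿ). -/
theorem stmt1 (n : ℕ) (hn : 0 < n) (W : Matrix (Fin n) (Fin n) ℝ)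
    (hsymm : ∀ i j, W i j = W j i) (hnonneg : ∀ i j, 0 ≤ W i j)
    (hdiag : ∀ i, W i i = 0) (lam : ℝ) (hlam : 0 < lam)
    (hbound : lam * (Finset.univ.sup'
        (Finset.univ_nonempty_iff.mpr (Fin.pos_iff_nonempty.mp hn))
        (fun i => ∑ j ∈ Finset.univ.erase i, W i j)) < 1) :
    ConvexOn ℝ Set.univ (fun x : Fin n → ℂ =>
      (1 / (2 * lam)) * ∑ i, ‖x i‖ ^ 2
        + ((∑ i, ‖x i‖)
            + (1 / 2) * ∑ i, ∑ j, W i j * (‖x i‖ * ‖x j‖))) := by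
  have hcoord : ∀ i, ConvexOn ℝ Set.univ (fun x : Fin n → ℂ => ‖x i‖) := fun i =>
    convexOn_univ_norm.comp_linearMap (LinearMap.proj i : (Fin n → ℂ) →ₗ[ℝ] ℂ)
  have hquad := ConvexOn.sum_mul_sq_add_sum_sum_mul_of_rowSum_le convex_univ hcoord
    (fun i x _ => norm_nonneg (x i)) hsymm hnonneg
    (rowSum_le_inv_of_mul_sup'_lt_one _ hdiag hlam hbound)
  refine ((ConvexOn.finset_sum (t := univ) convex_univ fun i _ => hcoord i).add
    (hquad.smul (by norm_num : (0 : ℝ) ≤ 1 / 2))).congr fun x _ => ?_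
  simp only [Pi.add_apply, smul_eq_mul, ← Finset.mul_sum]
  ring
end

section
/- Suppose λ > 0 satisfies λ · Σ_{j≠i} w_{ij} < 1 for every index i. Then the function x ↦ |x|ᵀ(I + λW)|x| is strictly convex on ℂⁿ (viewed as ℝ²ⁿ). -/
/-!
Put `a i = ‖x i‖` and `c i = 1 - λ ∑ⱼ W i j`, which is positive by the hypothesis since the diagonal
of `W` vanishes. Symmetry of `W` turns the quadratic form into
`∑ᵢ c i * a i ^ 2 + (λ / 2) ∑ᵢ ∑ⱼ W i j * (a i + a j) ^ 2`.
The first sum is strictly convex because `‖·‖²` is strictly convex on `ℂ` and all `c i > 0`; every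
term of the second is a nonnegative multiple of the square of the nonnegative convex function
`‖x i‖ + ‖x j‖`, hence convex.
-/

open Finset

section Convexity

variable {𝕜 E β ι : Type*}

lemma ConvexOn.finsetSum [Semiring 𝕜] [PartialOrder 𝕜] [AddCommMonoid E] [Module 𝕜 E]
    [AddCommMonoid β] [PartialOrder β] [IsOrderedAddMonoid β] [Module 𝕜 β]
    {S : Set E} (hS : Convex 𝕜 S) {t : Finset ι} {f : ι → E → β}
    (hf : ∀ i ∈ t, ConvexOn 𝕜 S (f i)) :
    ConvexOn 𝕜 S (fun x => ∑ i ∈ t, f i x) := by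
  classical
  induction t using Finset.induction_on with
  | empty => simpa using convexOn_const 0 hS
  | insert i t hi ih =>
    simp only [sum_insert hi]
    exact (hf i (mem_insert_self i t)).add (ih fun j hj => hf j (mem_insert_of_mem hj))

lemma StrictConvexOn.sum_mul_apply [Field 𝕜] [LinearOrder 𝕜] [IsStrictOrderedRing 𝕜]
    [AddCommGroup E] [Module 𝕜 E] [Fintype ι] {f : E → 𝕜}
    (hf : StrictConvexOn 𝕜 Set.univ f) {c : ι → 𝕜} (hc : ∀ i, 0 < c i) :
    StrictConvexOn 𝕜 Set.univ (fun x : ι → E => ∑ i, c i * f (x i)) := by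
  refine ⟨convex_univ, fun x _ y _ hxy a b ha hb hab => ?_⟩
  obtain ⟨k, hk⟩ := Function.ne_iff.mp hxy
  simp only [Pi.add_apply, Pi.smul_apply, smul_eq_mul, mul_sum, ← sum_add_distrib]
  refine sum_lt_sum (fun i _ => ?_) ⟨k, mem_univ k, ?_⟩
  · have := hf.convexOn.2 (Set.mem_univ (x i)) (Set.mem_univ (y i)) ha.le hb.le hab
    simp only [smul_eq_mul] at this
    nlinarith [hc i]
  · have := hf.2 (Set.mem_univ (x k)) (Set.mem_univ (y k)) hk ha hb hab
    simp only [smul_eq_mul] at this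
    nlinarith [hc k]

end Convexity

lemma strictConvexOn_univ_sq_norm {E : Type*} [NormedAddCommGroup E] [InnerProductSpace ℝ E] :
    StrictConvexOn ℝ Set.univ (fun x : E => ‖x‖ ^ 2) :=
  (strongConvexOn_iff_convex.2 (by simpa using convexOn_const 0 convex_univ)).strictConvexOn
    two_pos

lemma sum_mul_add_sq_of_symm {ι R : Type*} [Fintype ι] [CommRing R] {W : ι → ι → R} (hW : ∀ i j, W i j = W j i) (a : ι → R) :
    ∑ i, ∑ j, W i j * (a i + a j) ^ 2
      = 2 * ∑ i, ∑ j, W i j * (a i * a j) + 2 * ∑ i, (∑ j, W i j) * a i ^ 2 := by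
  have hswap : ∑ i, ∑ j, W i j * a j ^ 2 = ∑ i, ∑ j, W i j * a i ^ 2 := by
    rw [sum_comm]
    exact sum_congr rfl fun i _ => sum_congr rfl fun j _ => by rw [hW]
  have hexpand : ∀ i j, W i j * (a i + a j) ^ 2
      = W i j * a i ^ 2 + 2 * (W i j * (a i * a j)) + W i j * a j ^ 2 := fun i j => by ring
  simp only [hexpand, sum_add_distrib, hswap, ← mul_sum, ← sum_mul]
  ring

lemma sum_one_add_smul_apply_mul {ι : Type*} [Fintype ι] [DecidableEq ι]
    (W : Matrix ι ι ℝ) (hW : ∀ i j, W i j = W j i) (lam : ℝ) (a : ι → ℝ) :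
    ∑ i, ∑ j, ((1 : Matrix ι ι ℝ) + lam • W) i j * (a i * a j)
      = ∑ i, (1 - lam * ∑ j, W i j) * a i ^ 2
        + ∑ i, ∑ j, lam / 2 * W i j * (a i + a j) ^ 2 := by
  have hlhs : ∑ i, ∑ j, ((1 : Matrix ι ι ℝ) + lam • W) i j * (a i * a j)
      = ∑ i, a i ^ 2 + lam * ∑ i, ∑ j, W i j * (a i * a j) := by
    simp only [Matrix.add_apply, Matrix.one_apply, Matrix.smul_apply, smul_eq_mul, add_mul,
      ite_mul, one_mul, zero_mul, sum_add_distrib, sum_ite_eq, mem_univ, if_true, mul_sum,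
      mul_assoc, sq]
  have hrowSum : ∑ i, (1 - lam * ∑ j, W i j) * a i ^ 2
      = ∑ i, a i ^ 2 - lam * ∑ i, (∑ j, W i j) * a i ^ 2 := by
    simp only [sub_mul, one_mul, sum_sub_distrib, mul_assoc, ← mul_sum]
  have hpairs : ∑ i, ∑ j, lam / 2 * W i j * (a i + a j) ^ 2
      = lam / 2 * ∑ i, ∑ j, W i j * (a i + a j) ^ 2 := by
    simp only [mul_sum, mul_assoc]
  rw [hlhs, hrowSum, hpairs, sum_mul_add_sq_of_symm hW a]
  ring

theorem stmt2_general (n : ℕ) (W : Matrix (Fin n) (Fin n) ℝ)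
    (hsymm : ∀ i j, W i j = W j i) (hnonneg : ∀ i j, 0 ≤ W i j)
    (hdiag : ∀ i, W i i = 0) (lam : ℝ) (hlam : 0 < lam)
    (hbound : ∀ i, lam * ∑ j ∈ Finset.univ.erase i, W i j < 1) :
    StrictConvexOn ℝ Set.univ (fun x : Fin n → ℂ =>
      ∑ i, ∑ j, ((1 : Matrix (Fin n) (Fin n) ℝ) + lam • W) i j
        * (‖x i‖ * ‖x j‖)) := by
  have hdiagonal_pos : ∀ i, 0 < 1 - lam * ∑ j, W i j := fun i => by
    rw [← sum_erase univ (hdiag i)]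
    linarith [hbound i]
  have hcoupling : ∀ i j, ConvexOn ℝ Set.univ
      (fun x : Fin n → ℂ => lam / 2 * W i j * (‖x i‖ + ‖x j‖) ^ 2) := fun i j => by
    have hproj : ∀ k, ConvexOn ℝ Set.univ (fun x : Fin n → ℂ => ‖x k‖) := fun k =>
      convexOn_univ_norm.comp_linearMap (LinearMap.proj k : (Fin n → ℂ) →ₗ[ℝ] ℂ)
    have hsum_nonneg : ∀ x : Fin n → ℂ, 0 ≤ ‖x i‖ + ‖x j‖ := fun x => by positivity
    exact (((hproj i).add (hproj j)).pow (fun x _ => hsum_nonneg x) 2).smul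
      (mul_nonneg (by positivity) (hnonneg i j))
  simp_rw [sum_one_add_smul_apply_mul W hsymm lam]
  exact (strictConvexOn_univ_sq_norm.sum_mul_apply hdiagonal_pos).add_convexOn
    (ConvexOn.finsetSum convex_univ fun i _ =>
      ConvexOn.finsetSum convex_univ fun j _ => hcoupling i j)

/-- If λ·Σ_{j≠i} w_{ij} < 1 for every i, then x ↦ |x|ᵀ(I + λW)|x| is
strictly convex on ℂⁿ (viewed as ℝ²ⁿ). -/
theorem stmt2 (n : ℕ) (hn : 0 < n) (W : Matrix (Fin n) (Fin n) ℝ)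
    (hsymm : ∀ i j, W i j = W j i) (hnonneg : ∀ i j, 0 ≤ W i j)
    (hdiag : ∀ i, W i i = 0) (lam : ℝ) (hlam : 0 < lam)
    (hbound : ∀ i, lam * ∑ j ∈ Finset.univ.erase i, W i j < 1) :
    StrictConvexOn ℝ Set.univ (fun x : Fin n → ℂ =>
      ∑ i, ∑ j, ((1 : Matrix (Fin n) (Fin n) ℝ) + lam • W) i j
        * (‖x i‖ * ‖x j‖)) :=
  stmt2_general n W hsymm hnonneg hdiag lam hlam hbound
end

section
/- Let λ > 0 and suppose there exists an n×n real matrix R with all entries nonnegative such that I + λW = RᵀR (i.e., I + λW is completely positive). Then the function x ↦ |x|ᵀ(I + λW)|x| is convex on ℂⁿ (viewed as ℝ²ⁿ), and consequently for every z ∈ ℂⁿ the function x ↦ D_{λ,W}(x; z) = (1/2)‖z − x‖₂² + λ·P_W(x) is convex. -/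
open Finset Set Matrix

/-!
If `M = Rᵀ R` with `R` entrywise nonnegative, then
`|x|ᵀ M |x| = ∑ₖ (∑ᵢ R k i * |xᵢ|)²`. Each inner sum is a nonnegative combination of the convex
functions `x ↦ |xᵢ|`, hence convex and nonnegative, so its square is convex too.
For the objective, `‖z - x‖² = ‖z‖² - 2⟪z, x⟫ + ‖x‖²` turns `D(x; z)` into a constant, a linear
function, `λ ‖x‖₁` and `(1/2) |x|ᵀ (I + λW) |x|`; the `‖x‖²` borrowed from the fidelity term is
what makes the quadratic part of the penalty convex.
-/

theorem convexOn_finset_sum {ι E : Type*} [AddCommGroup E] [Module ℝ E] {s : Set E}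
    (hs : Convex ℝ s) {t : Finset ι} {f : ι → E → ℝ} (hf : ∀ i ∈ t, ConvexOn ℝ s (f i)) :
    ConvexOn ℝ s fun x => ∑ i ∈ t, f i x := by
  rw [← Finset.sum_fn]
  exact Finset.sum_induction f (ConvexOn ℝ s) (fun _ _ => ConvexOn.add) (convexOn_const 0 hs) hf

theorem Matrix.sum_sum_transpose_mul_self_mul {ι κ R : Type*} [Fintype ι] [Fintype κ]
    [CommSemiring R] (A : Matrix κ ι R) (a : ι → R) :
    ∑ i, ∑ j, (Aᵀ * A) i j * (a i * a j) = ∑ k, (∑ i, A k i * a i) ^ 2 := by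
  simp only [Matrix.mul_apply, Matrix.transpose_apply, Finset.sum_mul, Finset.mul_sum, sq]
  conv_lhs => enter [2, i]; rw [Finset.sum_comm]
  rw [Finset.sum_comm]
  exact Finset.sum_congr rfl fun k _ => Finset.sum_congr rfl fun i _ =>
    Finset.sum_congr rfl fun j _ => by ring

theorem Matrix.sum_sum_one_add_smul_mul {ι R : Type*} [Fintype ι] [DecidableEq ι] [CommRing R]
    (W : Matrix ι ι R) (c : R) (a : ι → R) :
    ∑ i, ∑ j, (1 + c • W) i j * (a i * a j)
      = ∑ i, a i ^ 2 + c * ∑ i, ∑ j, W i j * (a i * a j) := by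
  simp only [Matrix.add_apply, Matrix.one_apply, Matrix.smul_apply, smul_eq_mul, add_mul,
    Finset.sum_add_distrib, ite_mul, one_mul, zero_mul, Finset.sum_ite_eq, Finset.mem_univ,
    if_true, Finset.mul_sum, sq, mul_assoc]

section Normed

variable {ι κ E : Type*} [NormedAddCommGroup E] [NormedSpace ℝ E]

theorem convexOn_norm_apply (i : ι) : ConvexOn ℝ univ fun x : ι → E => ‖x i‖ :=
  convexOn_univ_norm.comp_linearMap (LinearMap.proj (R := ℝ) (φ := fun _ : ι => E) i)

theorem convexOn_sum_sq_sum_mul_norm [Fintype ι] [Fintype κ] (R : Matrix κ ι ℝ) (hR : ∀ k i, 0 ≤ R k i) :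
    ConvexOn ℝ univ fun x : ι → E => ∑ k, (∑ i, R k i * ‖x i‖) ^ 2 := by
  refine convexOn_finset_sum convex_univ fun k _ => ?_
  have hrow : ConvexOn ℝ univ fun x : ι → E => ∑ i, R k i * ‖x i‖ :=
    convexOn_finset_sum convex_univ fun i _ => (convexOn_norm_apply i).smul (hR k i)
  exact hrow.pow (fun x _ => Finset.sum_nonneg fun i _ => mul_nonneg (hR k i) (norm_nonneg _)) 2

theorem convexOn_sum_sum_mul_norm_mul_norm_of_eq_transpose_mul_self [Fintype ι] [Fintype κ]
    (M : Matrix ι ι ℝ) (R : Matrix κ ι ℝ) (hR : ∀ k i, 0 ≤ R k i) (hM : M = Rᵀ * R) :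
    ConvexOn ℝ univ fun x : ι → E => ∑ i, ∑ j, M i j * (‖x i‖ * ‖x j‖) := by
  subst hM
  simp_rw [Matrix.sum_sum_transpose_mul_self_mul]
  exact convexOn_sum_sq_sum_mul_norm R hR

end Normed

section InnerProduct

variable {ι E : Type*} [Fintype ι] [NormedAddCommGroup E] [InnerProductSpace ℝ E]

theorem convexOn_neg_sum_inner (z : ι → E) :
    ConvexOn ℝ univ fun x : ι → E => -∑ i, inner ℝ (z i) (x i) := by
  refine ((-∑ i, (innerₛₗ ℝ (z i)).comp (LinearMap.proj i)).convexOn convex_univ).congr ?_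
  intro x _
  simp

theorem convexOn_half_sum_norm_sub_sq_add_smul_penalty [DecidableEq ι] (W : Matrix ι ι ℝ)
    {lam : ℝ} (hlam : 0 ≤ lam)
    (hQ : ConvexOn ℝ univ fun x : ι → E => ∑ i, ∑ j, (1 + lam • W) i j * (‖x i‖ * ‖x j‖))
    (z : ι → E) :
    ConvexOn ℝ univ fun x : ι → E =>
      (1 / 2) * ∑ i, ‖z i - x i‖ ^ 2
        + lam * ((∑ i, ‖x i‖) + (1 / 2) * ∑ i, ∑ j, W i j * (‖x i‖ * ‖x j‖)) := by
  have hsplit : (fun x : ι → E =>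
      (1 / 2) * ∑ i, ‖z i - x i‖ ^ 2
        + lam * ((∑ i, ‖x i‖) + (1 / 2) * ∑ i, ∑ j, W i j * (‖x i‖ * ‖x j‖)))
      = fun x => (1 / 2) * ∑ i, ‖z i‖ ^ 2 + (-∑ i, inner ℝ (z i) (x i)
          + (lam • ∑ i, ‖x i‖
            + (1 / 2 : ℝ) • ∑ i, ∑ j, (1 + lam • W) i j * (‖x i‖ * ‖x j‖))) := by
    funext x
    simp only [Matrix.sum_sum_one_add_smul_mul, norm_sub_sq_real, Finset.sum_add_distrib,
      Finset.sum_sub_distrib, ← Finset.mul_sum, smul_eq_mul]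
    ring
  rw [hsplit]
  exact (convexOn_const _ convex_univ).add <| (convexOn_neg_sum_inner z).add <|
    ((convexOn_finset_sum convex_univ fun i _ => convexOn_norm_apply i).smul hlam).add
      (hQ.smul (by norm_num))

end InnerProduct

theorem stmt3_general (n : ℕ) (W : Matrix (Fin n) (Fin n) ℝ)
    (lam : ℝ) (hlam : 0 < lam)
    (R : Matrix (Fin n) (Fin n) ℝ) (hR : ∀ i j, 0 ≤ R i j)
    (hfact : (1 : Matrix (Fin n) (Fin n) ℝ) + lam • W = R.transpose * R) :
    ConvexOn ℝ Set.univ (fun x : Fin n → ℂ =>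
      ∑ i, ∑ j, ((1 : Matrix (Fin n) (Fin n) ℝ) + lam • W) i j
        * (‖x i‖ * ‖x j‖))
    ∧ ∀ z : Fin n → ℂ, ConvexOn ℝ Set.univ (fun x : Fin n → ℂ =>
        (1 / 2) * ∑ i, ‖z i - x i‖ ^ 2
          + lam * ((∑ i, ‖x i‖)
              + (1 / 2) * ∑ i, ∑ j, W i j * (‖x i‖ * ‖x j‖))) := by
  have hQ := convexOn_sum_sum_mul_norm_mul_norm_of_eq_transpose_mul_self (E := ℂ) _ R hR hfact
  exact ⟨hQ, convexOn_half_sum_norm_sub_sq_add_smul_penalty W hlam.le hQ⟩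

/-- If I + λW = RᵀR with R entrywise nonnegative (complete positivity), then
x ↦ |x|ᵀ(I + λW)|x| is convex on ℂⁿ, and consequently for every z ∈ ℂⁿ the function
x ↦ D_{λ,W}(x;z) = (1/2)‖z−x‖₂² + λ·P_W(x) is convex. -/
theorem stmt3 (n : ℕ) (hn : 0 < n) (W : Matrix (Fin n) (Fin n) ℝ)
    (hsymm : ∀ i j, W i j = W j i) (hnonneg : ∀ i j, 0 ≤ W i j)
    (hdiag : ∀ i, W i i = 0) (lam : ℝ) (hlam : 0 < lam)
    (R : Matrix (Fin n) (Fin n) ℝ) (hR : ∀ i j, 0 ≤ R i j)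
    (hfact : (1 : Matrix (Fin n) (Fin n) ℝ) + lam • W = R.transpose * R) :
    ConvexOn ℝ Set.univ (fun x : Fin n → ℂ =>
      ∑ i, ∑ j, ((1 : Matrix (Fin n) (Fin n) ℝ) + lam • W) i j
        * (‖x i‖ * ‖x j‖))
    ∧ ∀ z : Fin n → ℂ, ConvexOn ℝ Set.univ (fun x : Fin n → ℂ =>
        (1 / 2) * ∑ i, ‖z i - x i‖ ^ 2
          + lam * ((∑ i, ‖x i‖)
              + (1 / 2) * ∑ i, ∑ j, W i j * (‖x i‖ * ‖x j‖))) :=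
  stmt3_general n W lam hlam R hR hfact
end

section
/- Let β ≥ 0. For all x, z ∈ ℂⁿ, D_{β,W}(|x|; |z|) ≤ D_{β,W}(x; z), where |x| and |z| are regarded as vectors in ℂⁿ with nonnegative real components. Moreover, with the phase vector u ∈ ℂⁿ defined componentwise by uᵢ = zᵢ/|zᵢ| if zᵢ ≠ 0 and uᵢ = 1 otherwise, D_{β,W}(|x| ⊙ u; z) = D_{β,W}(|x|; |z|), where ⊙ denotes componentwise product. -/
/-!
The penalty `P_W` sees `x` only through `|x|`, so both claims reduce to the data-fit term,
coordinate by coordinate. For the inequality this is the reverse triangle inequality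
`| |zᵢ| - |xᵢ| | ≤ |zᵢ - xᵢ|`. For the equality, `zᵢ - |xᵢ| uᵢ = (|zᵢ| - |xᵢ|) uᵢ` with `|uᵢ| = 1`.
-/

namespace Complex

noncomputable def phase (w : ℂ) : ℂ := if w ≠ 0 then w / (‖w‖ : ℂ) else 1

theorem norm_phase (w : ℂ) : ‖phase w‖ = 1 := by
  by_cases hw : w = 0
  · simp [phase, hw]
  · rw [phase, if_pos hw, norm_div, Complex.norm_of_nonneg (norm_nonneg w),
      div_self (norm_ne_zero_iff.mpr hw)]

theorem ofReal_norm_mul_phase (w : ℂ) : (‖w‖ : ℂ) * phase w = w := by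
  by_cases hw : w = 0
  · simp [hw]
  · have : (‖w‖ : ℂ) ≠ 0 := ofReal_ne_zero.mpr (norm_ne_zero_iff.mpr hw)
    rw [phase, if_pos hw]
    field_simp

theorem norm_ofReal_mul_phase {r : ℝ} (hr : 0 ≤ r) (w : ℂ) : ‖(r : ℂ) * phase w‖ = r := by
  rw [norm_mul, norm_phase, Complex.norm_of_nonneg hr, mul_one]

theorem norm_sub_ofReal_mul_phase (r : ℝ) (w : ℂ) :
    ‖w - r * phase w‖ = ‖(‖w‖ : ℂ) - r‖ := by
  calc ‖w - r * phase w‖ = ‖((‖w‖ : ℂ) - r) * phase w‖ := by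
        rw [sub_mul, ofReal_norm_mul_phase]
    _ = ‖(‖w‖ : ℂ) - r‖ := by rw [norm_mul, norm_phase, mul_one]

theorem norm_sub_ofReal_norm_le (w v : ℂ) : ‖(‖w‖ : ℂ) - ‖v‖‖ ≤ ‖w - v‖ := by
  rw [← ofReal_sub, norm_real, Real.norm_eq_abs]
  exact abs_norm_sub_norm_le w v

end Complex

open Complex

theorem stmt7_general (n : ℕ) (W : Matrix (Fin n) (Fin n) ℝ)
    (β : ℝ)
    (D : (Fin n → ℂ) → (Fin n → ℂ) → ℝ)
    (hD : D = fun x z => (1 / 2) * ∑ i, ‖z i - x i‖ ^ 2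
        + β * ((∑ i, ‖x i‖)
            + (1 / 2) * ∑ i, ∑ j, W i j * (‖x i‖ * ‖x j‖)))
    (x z : Fin n → ℂ) (u : Fin n → ℂ)
    (hu : ∀ i, u i = if z i ≠ 0 then z i / (‖z i‖ : ℂ) else 1) :
    D (fun i => (‖x i‖ : ℂ)) (fun i => (‖z i‖ : ℂ)) ≤ D x z
    ∧ D (fun i => (‖x i‖ : ℂ) * u i) z
        = D (fun i => (‖x i‖ : ℂ)) (fun i => (‖z i‖ : ℂ)) := by
  obtain rfl : u = fun i => phase (z i) := funext hu
  have hnorm : ∀ w : ℂ, ‖(‖w‖ : ℂ)‖ = ‖w‖ := fun w => Complex.norm_of_nonneg (norm_nonneg w)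
  subst hD
  simp only [hnorm, norm_ofReal_mul_phase (norm_nonneg _), norm_sub_ofReal_mul_phase]
  refine ⟨?_, trivial⟩
  gcongr with i
  exact norm_sub_ofReal_norm_le (z i) (x i)

/-- For β ≥ 0 and all x, z ∈ ℂⁿ, D_{β,W}(|x|;|z|) ≤ D_{β,W}(x;z), and with the
phase vector u of z (uᵢ = zᵢ/|zᵢ| if zᵢ ≠ 0, else 1), D_{β,W}(|x| ⊙ u; z) = D_{β,W}(|x|;|z|). -/
theorem stmt7 (n : ℕ) (hn : 0 < n) (W : Matrix (Fin n) (Fin n) ℝ)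
    (hsymm : ∀ i j, W i j = W j i) (hnonneg : ∀ i j, 0 ≤ W i j)
    (hdiag : ∀ i, W i i = 0) (β : ℝ) (hβ : 0 ≤ β)
    (D : (Fin n → ℂ) → (Fin n → ℂ) → ℝ)
    (hD : D = fun x z => (1 / 2) * ∑ i, ‖z i - x i‖ ^ 2
        + β * ((∑ i, ‖x i‖)
            + (1 / 2) * ∑ i, ∑ j, W i j * (‖x i‖ * ‖x j‖)))
    (x z : Fin n → ℂ) (u : Fin n → ℂ)
    (hu : ∀ i, u i = if z i ≠ 0 then z i / (‖z i‖ : ℂ) else 1) :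
    D (fun i => (‖x i‖ : ℂ)) (fun i => (‖z i‖ : ℂ)) ≤ D x z
    ∧ D (fun i => (‖x i‖ : ℂ) * u i) z
        = D (fun i => (‖x i‖ : ℂ)) (fun i => (‖z i‖ : ℂ)) :=
  stmt7_general n W β D hD x z u hu
end

section
/- Let β > 0, suppose I + βW is positive semidefinite with spectral norm σ > 0, let z ∈ ℂⁿ, and let 0 < η ≤ 2/σ. Define S : ℝⁿ → ℝⁿ₊ by S(x) = P₊(x − η[(I + βW)x + β𝟙 − |z|]). Then for every x in the nonnegative orthant ℝⁿ₊, D_{β,W}(x; |z|) − D_{β,W}(S(x); |z|) ≥ (1/η − σ/2)·‖x − S(x)‖₂² ≥ 0. -/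
/-!
The objective restricted to the nonnegative orthant is the quadratic
`f x = ½ xᵀAx + cᵀx + const` with `A = I + βW`, `c = β𝟙 - |z|`, and `S` is the projected gradient
step for `f`. Since `f` is exactly quadratic, `f x - f y = ⟨∇f x, x - y⟩ - ½ (x - y)ᵀA(x - y)`.
The characterisation of the projection onto the orthant gives `‖x - S x‖² ≤ η ⟨∇f x, x - S x⟩`,
and the quadratic term is at most `σ/2 ‖x - S x‖²`.
-/

open Finset Matrix
open scoped RealInnerProductSpace

theorem Matrix.IsSymm.dotProduct_mulVec_comm {ι R : Type*} [Fintype ι] [CommSemiring R]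
    {A : Matrix ι ι R} (hA : A.IsSymm) (x y : ι → R) : x ⬝ᵥ A *ᵥ y = y ⬝ᵥ A *ᵥ x := by
  rw [dotProduct_mulVec, ← hA.eq, vecMul_transpose, dotProduct_comm, hA.eq]

theorem Matrix.IsSymm.quadratic_sub {ι R : Type*} [Fintype ι] [Field R] [CharZero R]
    {A : Matrix ι ι R} (hA : A.IsSymm) (c x y : ι → R) :
    (1 / 2) * (x ⬝ᵥ A *ᵥ x) + c ⬝ᵥ x - ((1 / 2) * (y ⬝ᵥ A *ᵥ y) + c ⬝ᵥ y)
      = (A *ᵥ x + c) ⬝ᵥ (x - y) - (1 / 2) * ((x - y) ⬝ᵥ A *ᵥ (x - y)) := by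
  simp only [mulVec_sub, sub_dotProduct, dotProduct_sub, add_dotProduct,
    dotProduct_comm (A *ᵥ x)]
  linear_combination (-1 / 2) * hA.dotProduct_mulVec_comm x y

theorem Matrix.dotProduct_mulVec_le_norm_toEuclideanCLM {ι : Type*} [Fintype ι] [DecidableEq ι]
    (A : Matrix ι ι ℝ) (v : ι → ℝ) :
    v ⬝ᵥ A *ᵥ v ≤ ‖toEuclideanCLM (𝕜 := ℝ) A‖ * (v ⬝ᵥ v) := by
  set u : EuclideanSpace ℝ ι := WithLp.toLp 2 v
  have huu : ‖u‖ * ‖u‖ = v ⬝ᵥ v := by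
    rw [← real_inner_self_eq_norm_mul_norm, EuclideanSpace.inner_toLp_toLp, star_trivial]
  calc v ⬝ᵥ A *ᵥ v = ⟪u, toEuclideanCLM (𝕜 := ℝ) A u⟫ := (inner_toEuclideanCLM A u u).symm
    _ ≤ ‖u‖ * ‖toEuclideanCLM (𝕜 := ℝ) A u‖ := real_inner_le_norm _ _
    _ ≤ ‖u‖ * (‖toEuclideanCLM (𝕜 := ℝ) A‖ * ‖u‖) := by
      gcongr; exact ContinuousLinearMap.le_opNorm _ _
    _ = ‖toEuclideanCLM (𝕜 := ℝ) A‖ * (v ⬝ᵥ v) := by rw [← huu]; ring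

theorem sq_sub_max_sub_zero_le {x t : ℝ} (hx : 0 ≤ x) :
    (x - max (x - t) 0) ^ 2 ≤ t * (x - max (x - t) 0) := by
  rcases le_total 0 (x - t) with h | h
  · rw [max_eq_left h]; nlinarith
  · rw [max_eq_right h]; nlinarith

theorem sub_dotProduct_sub_le_of_eq_max {ι : Type*} [Fintype ι] {x y g : ι → ℝ} {η : ℝ}
    (hx : ∀ i, 0 ≤ x i) (hy : ∀ i, y i = max (x i - η * g i) 0) :
    (x - y) ⬝ᵥ (x - y) ≤ η * (g ⬝ᵥ (x - y)) := by
  simp only [dotProduct, mul_sum, Pi.sub_apply]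
  refine sum_le_sum fun i _ => ?_
  have := sq_sub_max_sub_zero_le (t := η * g i) (hx i)
  rw [hy]; nlinarith

theorem half_le_one_div_of_le_two_div {σ η : ℝ} (hη0 : 0 < η) (hη : η ≤ 2 / σ) :
    σ / 2 ≤ 1 / η := by
  rcases le_or_gt σ 0 with hσ | hσ
  · have : 0 < 1 / η := by positivity
    linarith
  · rw [le_div_iff₀ hσ] at hη
    rw [le_div_iff₀ hη0]; linarith

theorem objective_eq_quadratic {ι : Type*} [Fintype ι] [DecidableEq ι] (W : Matrix ι ι ℝ)
    (β : ℝ) (a x : ι → ℝ) :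
    (1 / 2) * ∑ i, (a i - x i) ^ 2 + β * ((∑ i, x i) + (1 / 2) * ∑ i, ∑ j, W i j * (x i * x j))
      = (1 / 2) * (x ⬝ᵥ (1 + β • W) *ᵥ x) + (fun i => β - a i) ⬝ᵥ x + (1 / 2) * (a ⬝ᵥ a) := by
  have hW : x ⬝ᵥ W *ᵥ x = ∑ i, ∑ j, W i j * (x i * x j) := by
    simp only [dotProduct, mulVec, mul_sum]
    exact sum_congr rfl fun i _ => sum_congr rfl fun j _ => by ring
  have hdiag : (1 / 2) * ∑ i, (a i - x i) ^ 2 + β * ∑ i, x i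
      = (1 / 2) * (a ⬝ᵥ a) + (1 / 2) * (x ⬝ᵥ x) + (fun i => β - a i) ⬝ᵥ x := by
    simp only [dotProduct, mul_sum, ← sum_add_distrib]
    exact sum_congr rfl fun i _ => by ring
  rw [add_mulVec, one_mulVec, smul_mulVec, dotProduct_add, dotProduct_smul, smul_eq_mul, hW]
  linear_combination hdiag

theorem stmt10_general (n : ℕ) (W : Matrix (Fin n) (Fin n) ℝ)
    (hsymm : ∀ i j, W i j = W j i) (β : ℝ) (σ : ℝ)
    (hσ : σ = ‖Matrix.toEuclideanCLM (𝕜 := ℝ) ((1 : Matrix (Fin n) (Fin n) ℝ) + β • W)‖)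
    (z : Fin n → ℂ) (η : ℝ) (hη0 : 0 < η) (hη : η ≤ 2 / σ)
    (S : (Fin n → ℝ) → (Fin n → ℝ))
    (hS : S = fun x i => max (x i
        - η * ((((1 : Matrix (Fin n) (Fin n) ℝ) + β • W).mulVec x) i
            + β - ‖z i‖)) 0)
    (Dr : (Fin n → ℝ) → ℝ)
    (hDr : Dr = fun x => (1 / 2) * ∑ i, (‖z i‖ - x i) ^ 2
        + β * ((∑ i, |x i|) + (1 / 2) * ∑ i, ∑ j, W i j * (|x i| * |x j|))) :
    ∀ x : Fin n → ℝ, (∀ i, 0 ≤ x i) →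
      (1 / η - σ / 2) * ∑ i, (x i - S x i) ^ 2 ≤ Dr x - Dr (S x)
      ∧ 0 ≤ (1 / η - σ / 2) * ∑ i, (x i - S x i) ^ 2 := by
  intro x hx
  set A : Matrix (Fin n) (Fin n) ℝ := 1 + β • W
  set g : Fin n → ℝ := A *ᵥ x + fun i => β - ‖z i‖
  set y := S x
  have hA : A.IsSymm := isSymm_one.add ((IsSymm.ext fun i j => hsymm j i).smul β)
  have hy : ∀ i, y i = max (x i - η * g i) 0 := fun i => by
    simp only [y, hS, g, Pi.add_apply, add_sub_assoc]
  have hy0 : ∀ i, 0 ≤ y i := fun i => (hy i).symm ▸ le_max_right _ _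
  have hdescent : Dr x - Dr y = g ⬝ᵥ (x - y) - (1 / 2) * ((x - y) ⬝ᵥ A *ᵥ (x - y)) := by
    simp only [hDr, abs_of_nonneg (hx _), abs_of_nonneg (hy0 _), objective_eq_quadratic]
    linear_combination hA.quadratic_sub _ x y
  have hproj : (1 / η) * ((x - y) ⬝ᵥ (x - y)) ≤ g ⬝ᵥ (x - y) := by
    rw [one_div, inv_mul_le_iff₀ hη0]
    exact sub_dotProduct_sub_le_of_eq_max hx hy
  have hquad : (x - y) ⬝ᵥ A *ᵥ (x - y) ≤ σ * ((x - y) ⬝ᵥ (x - y)) :=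
    hσ ▸ dotProduct_mulVec_le_norm_toEuclideanCLM A (x - y)
  have hcoef : 0 ≤ 1 / η - σ / 2 := sub_nonneg.mpr (half_le_one_div_of_le_two_div hη0 hη)
  have hsq : ∑ i, (x i - y i) ^ 2 = (x - y) ⬝ᵥ (x - y) := by
    simp only [dotProduct, Pi.sub_apply, sq]
  rw [hsq]
  exact ⟨by linarith, mul_nonneg hcoef (dotProduct_self_star_nonneg _)⟩

/-- With I + βW psd of spectral norm σ > 0 and 0 < η ≤ 2/σ, one projected
gradient step S satisfies, for every x in the nonnegative orthant,
D_{β,W}(x;|z|) − D_{β,W}(S(x);|z|) ≥ (1/η − σ/2)‖x − S(x)‖₂² ≥ 0. -/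
theorem stmt10 (n : ℕ) (hn : 0 < n) (W : Matrix (Fin n) (Fin n) ℝ)
    (hsymm : ∀ i j, W i j = W j i) (hnonneg : ∀ i j, 0 ≤ W i j)
    (hdiag : ∀ i, W i i = 0) (β : ℝ) (hβ : 0 < β)
    (hpsd : ((1 : Matrix (Fin n) (Fin n) ℝ) + β • W).PosSemidef)
    (σ : ℝ) (hσpos : 0 < σ)
    (hσ : σ = ‖Matrix.toEuclideanCLM (𝕜 := ℝ) ((1 : Matrix (Fin n) (Fin n) ℝ) + β • W)‖)
    (z : Fin n → ℂ) (η : ℝ) (hη0 : 0 < η) (hη : η ≤ 2 / σ)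
    (S : (Fin n → ℝ) → (Fin n → ℝ))
    (hS : S = fun x i => max (x i
        - η * ((((1 : Matrix (Fin n) (Fin n) ℝ) + β • W).mulVec x) i
            + β - ‖z i‖)) 0)
    (Dr : (Fin n → ℝ) → ℝ)
    (hDr : Dr = fun x => (1 / 2) * ∑ i, (‖z i‖ - x i) ^ 2
        + β * ((∑ i, |x i|) + (1 / 2) * ∑ i, ∑ j, W i j * (|x i| * |x j|))) :
    ∀ x : Fin n → ℝ, (∀ i, 0 ≤ x i) →
      (1 / η - σ / 2) * ∑ i, (x i - S x i) ^ 2 ≤ Dr x - Dr (S x)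
      ∧ 0 ≤ (1 / η - σ / 2) * ∑ i, (x i - S x i) ^ 2 :=
  stmt10_general n W hsymm β σ hσ z η hη0 hη S hS Dr hDr
end

section
/- Let β > 0, suppose I + βW is positive semidefinite with spectral norm σ > 0, let z ∈ ℂⁿ, let 0 < η ≤ 2/σ, and define S : ℝⁿ → ℝⁿ₊ by S(x) = P₊(x − η[(I + βW)x + β𝟙 − |z|]). Then for every x ∈ ℝⁿ₊ and every integer m ≥ 1, D_{β,W}(S^m(x); |z|) ≤ D_{β,W}(x; |z|), where S^m denotes S iterated m times. -/
/-!
On the nonnegative orthant `|x| = x`, so `D_{β,W}(·; |z|)` is, up to a constant, the quadratic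
`f x = ½ xᵀAx + bᵀx` with `A = I + βW` and `b = β𝟙 − |z|`, and `S` is projected gradient descent
for `f`. For a step `d = S x − x` the projection gives `dᵀd + η ∇f(x)ᵀd ≤ 0`, while the spectral
bound gives `f (x + d) ≤ f x + ∇f(x)ᵀd + (σ/2) dᵀd`; since `ησ ≤ 2` the two combine to
`f (S x) ≤ f x`.
-/

open Finset Matrix

section ProjectedGradient

variable {ι : Type*} [Fintype ι]

lemma dotProduct_mulVec_self_le_norm_toEuclideanCLM [DecidableEq ι] (A : Matrix ι ι ℝ)
    (d : ι → ℝ) : d ⬝ᵥ A *ᵥ d ≤ ‖toEuclideanCLM (𝕜 := ℝ) A‖ * (d ⬝ᵥ d) := by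
  set v : EuclideanSpace ℝ ι := WithLp.toLp 2 d
  have hquad : d ⬝ᵥ A *ᵥ d = inner ℝ v (toEuclideanCLM (𝕜 := ℝ) A v) := by
    rw [toEuclideanCLM_toLp, EuclideanSpace.inner_eq_star_dotProduct, dotProduct_comm]
    rfl
  have hnorm : d ⬝ᵥ d = ‖v‖ ^ 2 := by
    rw [← real_inner_self_eq_norm_sq, EuclideanSpace.inner_eq_star_dotProduct]
    rfl
  calc d ⬝ᵥ A *ᵥ d ≤ ‖v‖ * ‖toEuclideanCLM (𝕜 := ℝ) A v‖ := hquad ▸ real_inner_le_norm _ _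
    _ ≤ ‖v‖ * (‖toEuclideanCLM (𝕜 := ℝ) A‖ * ‖v‖) :=
        mul_le_mul_of_nonneg_left ((toEuclideanCLM (𝕜 := ℝ) A).le_opNorm v) (norm_nonneg v)
    _ = ‖toEuclideanCLM (𝕜 := ℝ) A‖ * (d ⬝ᵥ d) := by rw [hnorm]; ring

/-- For symmetric `A` its gradient at `x` is `A x + b`. -/
noncomputable def quadraticObjective (A : Matrix ι ι ℝ) (b x : ι → ℝ) : ℝ :=
  (1 / 2) * (x ⬝ᵥ A *ᵥ x) + b ⬝ᵥ x

lemma quadraticObjective_add {A : Matrix ι ι ℝ} (hA : A.IsSymm) (b x d : ι → ℝ) :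
    quadraticObjective A b (x + d)
      = quadraticObjective A b x + (A *ᵥ x + b) ⬝ᵥ d + (1 / 2) * (d ⬝ᵥ A *ᵥ d) := by
  have hcross : x ⬝ᵥ A *ᵥ d = d ⬝ᵥ A *ᵥ x := by
    rw [dotProduct_mulVec, ← mulVec_transpose, hA.eq, dotProduct_comm]
  simp only [quadraticObjective, mulVec_add, dotProduct_add, add_dotProduct, hcross,
    dotProduct_comm (A *ᵥ x) d]
  ring

def projGradStep (A : Matrix ι ι ℝ) (b : ι → ℝ) (η : ℝ) (x : ι → ℝ) : ι → ℝ :=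
  fun i => max (x i - η * ((A *ᵥ x) i + b i)) 0

lemma projGradStep_nonneg (A : Matrix ι ι ℝ) (b : ι → ℝ) (η : ℝ) (x : ι → ℝ) (i : ι) :
    0 ≤ projGradStep A b η x i :=
  le_max_right _ _

/-- The variational inequality of the projection onto `[0, ∞)`, tested at the point `a ≥ 0`. -/
lemma max_sub_zero_variational {a g : ℝ} (ha : 0 ≤ a) :
    (max (a - g) 0 - a + g) * (max (a - g) 0 - a) ≤ 0 := by
  rcases le_total 0 (a - g) with h | h
  · rw [max_eq_left h]; nlinarith
  · rw [max_eq_right h]; nlinarith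

lemma quadraticObjective_projGradStep_le {A : Matrix ι ι ℝ} (hA : A.IsSymm) {σ η : ℝ}
    (hbound : ∀ d, d ⬝ᵥ A *ᵥ d ≤ σ * (d ⬝ᵥ d)) (hη : 0 < η) (hησ : η * σ ≤ 2)
    (b : ι → ℝ) {x : ι → ℝ} (hx : ∀ i, 0 ≤ x i) :
    quadraticObjective A b (projGradStep A b η x) ≤ quadraticObjective A b x := by
  set g := A *ᵥ x + b
  set d := projGradStep A b η x - x
  have hproj : d ⬝ᵥ d + η * (g ⬝ᵥ d) ≤ 0 := by
    have hsum : d ⬝ᵥ d + η * (g ⬝ᵥ d) = ∑ i, (d i + η * g i) * d i := by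
      simp only [dotProduct, mul_sum, ← sum_add_distrib]
      exact sum_congr rfl fun i _ => by ring
    rw [hsum]
    refine sum_nonpos fun i _ => ?_
    simpa [d, g, projGradStep, sub_add_eq_add_sub] using
      max_sub_zero_variational (g := η * g i) (hx i)
  have hdd : 0 ≤ d ⬝ᵥ d := sum_nonneg fun i _ => mul_self_nonneg (d i)
  have hexpand := quadraticObjective_add hA b x d
  rw [add_sub_cancel] at hexpand
  nlinarith [hbound d, mul_le_mul_of_nonneg_right hησ hdd]

end ProjectedGradient

lemma objective_eq_quadraticObjective {ι : Type*} [Fintype ι] [DecidableEq ι]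
    (W : Matrix ι ι ℝ) (β : ℝ) (r u : ι → ℝ) (hu : ∀ i, 0 ≤ u i) :
    (1 / 2) * ∑ i, (r i - u i) ^ 2 + β * ((∑ i, |u i|) + (1 / 2) * ∑ i, ∑ j, W i j * (|u i| * |u j|))
      = quadraticObjective (1 + β • W) (fun i => β - r i) u + (1 / 2) * ∑ i, r i ^ 2 := by
  have hW : ∑ i, ∑ j, W i j * (u i * u j) = u ⬝ᵥ W *ᵥ u := by
    simp only [dotProduct, mulVec, mul_sum]
    exact sum_congr rfl fun i _ => sum_congr rfl fun j _ => by ring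
  simp only [abs_of_nonneg (hu _), hW, quadraticObjective, add_mulVec, one_mulVec, smul_mulVec,
    dotProduct_add, dotProduct_smul, smul_eq_mul]
  simp only [dotProduct, mul_sum, ← sum_add_distrib]
  exact sum_congr rfl fun i _ => by ring

lemma iterate_le_of_forall_le {α β : Type*} [Preorder β] {f : α → α} {g : α → β} {s : Set α}
    (hs : Set.MapsTo f s s) (hg : ∀ x ∈ s, g (f x) ≤ g x) (m : ℕ) {x : α} (hx : x ∈ s) :
    g (f^[m] x) ≤ g x := by
  induction m generalizing x with
  | zero => rfl
  | succ k ih => exact (ih (hs hx)).trans (hg x hx)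

theorem stmt11_general (n : ℕ) (W : Matrix (Fin n) (Fin n) ℝ)
    (hsymm : ∀ i j, W i j = W j i) (β : ℝ)
    (σ : ℝ)
    (hσ : σ = ‖Matrix.toEuclideanCLM (𝕜 := ℝ) ((1 : Matrix (Fin n) (Fin n) ℝ) + β • W)‖)
    (z : Fin n → ℂ) (η : ℝ) (hη0 : 0 < η) (hη : η ≤ 2 / σ)
    (S : (Fin n → ℝ) → (Fin n → ℝ))
    (hS : S = fun x i => max (x i
        - η * ((((1 : Matrix (Fin n) (Fin n) ℝ) + β • W).mulVec x) i
            + β - ‖z i‖)) 0)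
    (Dr : (Fin n → ℝ) → ℝ)
    (hDr : Dr = fun x => (1 / 2) * ∑ i, (‖z i‖ - x i) ^ 2
        + β * ((∑ i, |x i|) + (1 / 2) * ∑ i, ∑ j, W i j * (|x i| * |x j|))) :
    ∀ x : Fin n → ℝ, (∀ i, 0 ≤ x i) → ∀ m : ℕ, 1 ≤ m → Dr (S^[m] x) ≤ Dr x := by
  intro x hx m _
  set A : Matrix (Fin n) (Fin n) ℝ := 1 + β • W
  set b : Fin n → ℝ := fun i => β - ‖z i‖
  have hA : A.IsSymm := isSymm_one.add ((IsSymm.ext fun i j => hsymm j i).smul β)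
  have hStep : S = projGradStep A b η := by
    simp only [hS, b, add_sub_assoc]
    rfl
  have hησ : η * σ ≤ 2 := by
    rcases (hσ ▸ norm_nonneg _ : 0 ≤ σ).eq_or_lt with h | h
    · simp [← h]
    · exact (le_div_iff₀ h).mp hη
  have hDrq : ∀ u, (∀ i, 0 ≤ u i) → Dr u = quadraticObjective A b u + (1 / 2) * ∑ i, ‖z i‖ ^ 2 :=
    fun u hu => hDr ▸ objective_eq_quadraticObjective W β (fun i => ‖z i‖) u hu
  refine iterate_le_of_forall_le (s := {u : Fin n → ℝ | ∀ i, 0 ≤ u i})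
    (fun u _ => hStep ▸ projGradStep_nonneg A b η u) (fun u hu => ?_) m hx
  rw [hDrq u hu, hDrq (S u) (hStep ▸ projGradStep_nonneg A b η u), hStep]
  gcongr 1
  exact quadraticObjective_projGradStep_le hA
    (fun d => hσ ▸ dotProduct_mulVec_self_le_norm_toEuclideanCLM A d) hη0 hησ b hu

/-- With I + βW psd of spectral norm σ > 0 and 0 < η ≤ 2/σ, for every x in
the nonnegative orthant and every m ≥ 1, D_{β,W}(S^m(x);|z|) ≤ D_{β,W}(x;|z|). -/
theorem stmt11 (n : ℕ) (hn : 0 < n) (W : Matrix (Fin n) (Fin n) ℝ)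
    (hsymm : ∀ i j, W i j = W j i) (hnonneg : ∀ i j, 0 ≤ W i j)
    (hdiag : ∀ i, W i i = 0) (β : ℝ) (hβ : 0 < β)
    (hpsd : ((1 : Matrix (Fin n) (Fin n) ℝ) + β • W).PosSemidef)
    (σ : ℝ) (hσpos : 0 < σ)
    (hσ : σ = ‖Matrix.toEuclideanCLM (𝕜 := ℝ) ((1 : Matrix (Fin n) (Fin n) ℝ) + β • W)‖)
    (z : Fin n → ℂ) (η : ℝ) (hη0 : 0 < η) (hη : η ≤ 2 / σ)
    (S : (Fin n → ℝ) → (Fin n → ℝ))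
    (hS : S = fun x i => max (x i
        - η * ((((1 : Matrix (Fin n) (Fin n) ℝ) + β • W).mulVec x) i
            + β - ‖z i‖)) 0)
    (Dr : (Fin n → ℝ) → ℝ)
    (hDr : Dr = fun x => (1 / 2) * ∑ i, (‖z i‖ - x i) ^ 2
        + β * ((∑ i, |x i|) + (1 / 2) * ∑ i, ∑ j, W i j * (|x i| * |x j|))) :
    ∀ x : Fin n → ℝ, (∀ i, 0 ≤ x i) → ∀ m : ℕ, 1 ≤ m → Dr (S^[m] x) ≤ Dr x :=
  stmt11_general n W hsymm β σ hσ z η hη0 hη S hS Dr hDr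
end

section
/- Suppose λ > 0 satisfies λ · (max_i Σ_{j≠i} w_{ij}) < 1. Then for every z ∈ ℂⁿ, the threshold function T_{λ,W}(z) is well-defined: the function x ↦ D_{λ,W}(x; z) attains its minimum over ℂⁿ at a unique point. -/
/-!
For `S` the largest row sum of `W`, the objective is strongly convex along midpoints:
`D(m) ≤ (D x + D y) / 2 - (1 - λ S) / 8 * ‖x - y‖²` for `m` the midpoint of `x` and `y`.
The fidelity term contributes `-‖x - y‖² / 4` by Apollonius' theorem, the `ℓ¹` term is convex, and
the coupling term `|x|ᵀ W |x|` loses at most `S ‖x - y‖² / 4`, since `-cᵀ W c ≤ S ‖c‖²` for a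
symmetric nonnegative `W` with row sums at most `S` (applied to `c = |x| - |y|`). Hence two
minimizers coincide; a minimizer exists because the objective is continuous and coercive.
-/

open Finset Filter

variable {ι E : Type*} [Fintype ι]

theorem neg_sum_sum_mul_le_sum_rowSum_mul_sq {W : ι → ι → ℝ}
    (hsymm : ∀ i j, W i j = W j i) (hnonneg : ∀ i j, 0 ≤ W i j) (c : ι → ℝ) :
    -∑ i, ∑ j, W i j * (c i * c j) ≤ ∑ i, (∑ j, W i j) * c i ^ 2 := by
  have hswap : ∑ i, ∑ j, W i j * c j ^ 2 = ∑ i, ∑ j, W i j * c i ^ 2 := by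
    rw [sum_comm]
    simp_rw [hsymm]
  calc -∑ i, ∑ j, W i j * (c i * c j)
      ≤ ∑ i, ∑ j, (W i j * c i ^ 2 + W i j * c j ^ 2) / 2 := by
        rw [← sum_neg_distrib]
        gcongr with i _
        rw [← sum_neg_distrib]
        gcongr with j _
        nlinarith [mul_nonneg (hnonneg i j) (sq_nonneg (c i + c j))]
    _ = ∑ i, (∑ j, W i j) * c i ^ 2 := by
        simp only [← sum_div, sum_add_distrib, hswap, sum_mul]
        ring

theorem dist_sq_le_sum_norm_sub_sq [SeminormedAddCommGroup E] (x y : ι → E) :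
    dist x y ^ 2 ≤ ∑ i, ‖x i - y i‖ ^ 2 := by
  rw [← Real.le_sqrt dist_nonneg (sum_nonneg fun i _ => sq_nonneg _)]
  refine (dist_pi_le_iff (Real.sqrt_nonneg _)).2 fun i => ?_
  rw [dist_eq_norm]
  exact Real.le_sqrt_of_sq_le
    (single_le_sum (f := fun i => ‖x i - y i‖ ^ 2) (fun i _ => sq_nonneg _) (mem_univ i))

theorem norm_midpoint_le [SeminormedAddCommGroup E] [NormedSpace ℝ E] (x y : E) :
    ‖midpoint ℝ x y‖ ≤ (‖x‖ + ‖y‖) / 2 := by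
  simpa using dist_midpoint_midpoint_le x y 0 0

theorem norm_sub_midpoint_sq [NormedAddCommGroup E] [InnerProductSpace ℝ E] (z x y : E) :
    ‖z - midpoint ℝ x y‖ ^ 2 = (‖z - x‖ ^ 2 + ‖z - y‖ ^ 2) / 2 - ‖x - y‖ ^ 2 / 4 := by
  have := EuclideanGeometry.dist_sq_add_dist_sq_eq_two_mul_dist_midpoint_sq_add_half_dist_sq
    z x y
  simp only [dist_eq_norm] at this
  linarith

section Objective

variable [NormedAddCommGroup E] {W : ι → ι → ℝ} {S lam : ℝ}

theorem sum_sum_mul_norm_midpoint_le [NormedSpace ℝ E] (hsymm : ∀ i j, W i j = W j i)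
    (hnonneg : ∀ i j, 0 ≤ W i j) (hrow : ∀ i, ∑ j, W i j ≤ S) (x y : ι → E) :
    ∑ i, ∑ j, W i j * (‖midpoint ℝ (x i) (y i)‖ * ‖midpoint ℝ (x j) (y j)‖)
      ≤ (∑ i, ∑ j, W i j * (‖x i‖ * ‖x j‖)) / 2 + (∑ i, ∑ j, W i j * (‖y i‖ * ‖y j‖)) / 2
        + S * (∑ i, ‖x i - y i‖ ^ 2) / 4 := by
  set a : ι → ℝ := fun i => ‖x i‖
  set b : ι → ℝ := fun i => ‖y i‖
  have hdiff :
      -∑ i, ∑ j, W i j * ((a i - b i) * (a j - b j)) ≤ S * ∑ i, ‖x i - y i‖ ^ 2 :=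
    calc -∑ i, ∑ j, W i j * ((a i - b i) * (a j - b j))
        ≤ ∑ i, (∑ j, W i j) * (a i - b i) ^ 2 :=
          neg_sum_sum_mul_le_sum_rowSum_mul_sq hsymm hnonneg _
      _ ≤ ∑ i, S * ‖x i - y i‖ ^ 2 := by
          refine sum_le_sum fun i _ => mul_le_mul (hrow i) ?_ (sq_nonneg _)
            ((sum_nonneg fun j _ => hnonneg i j).trans (hrow i))
          exact sq_le_sq.2 ((abs_norm_sub_norm_le _ _).trans_eq (abs_norm _).symm)
      _ = S * ∑ i, ‖x i - y i‖ ^ 2 := (mul_sum _ _ _).symm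
  calc ∑ i, ∑ j, W i j * (‖midpoint ℝ (x i) (y i)‖ * ‖midpoint ℝ (x j) (y j)‖)
      ≤ ∑ i, ∑ j, W i j * ((a i + b i) / 2 * ((a j + b j) / 2)) := by
        gcongr with i _ j _
        · exact hnonneg i j
        all_goals exact norm_midpoint_le _ _
    _ = (∑ i, ∑ j, W i j * (a i * a j)) / 2 + (∑ i, ∑ j, W i j * (b i * b j)) / 2
          - (∑ i, ∑ j, W i j * ((a i - b i) * (a j - b j))) / 4 := by
        simp only [sum_div, ← sum_add_distrib, ← sum_sub_distrib]
        exact sum_congr rfl fun i _ => sum_congr rfl fun j _ => by ring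
    _ ≤ _ := by linarith

noncomputable def thresholdObjective (W : ι → ι → ℝ) (lam : ℝ) (z x : ι → E) : ℝ :=
  (1 / 2) * ∑ i, ‖z i - x i‖ ^ 2
    + lam * ((∑ i, ‖x i‖) + (1 / 2) * ∑ i, ∑ j, W i j * (‖x i‖ * ‖x j‖))

theorem continuous_thresholdObjective (W : ι → ι → ℝ) (lam : ℝ) (z : ι → E) :
    Continuous (thresholdObjective W lam z) := by
  unfold thresholdObjective
  fun_prop

theorem half_dist_sq_le_thresholdObjective (hnonneg : ∀ i j, 0 ≤ W i j) (hlam : 0 ≤ lam)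
    (z x : ι → E) : 1 / 2 * dist z x ^ 2 ≤ thresholdObjective W lam z x := by
  have hquad : 0 ≤ ∑ i, ∑ j, W i j * (‖x i‖ * ‖x j‖) :=
    sum_nonneg fun i _ => sum_nonneg fun j _ => mul_nonneg (hnonneg i j) (by positivity)
  have hpenalty : 0 ≤ (∑ i, ‖x i‖) + (1 / 2) * ∑ i, ∑ j, W i j * (‖x i‖ * ‖x j‖) := by
    positivity
  have := dist_sq_le_sum_norm_sub_sq z x
  unfold thresholdObjective
  nlinarith [mul_nonneg hlam hpenalty]

theorem tendsto_thresholdObjective_cocompact [ProperSpace E] (hnonneg : ∀ i j, 0 ≤ W i j)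
    (hlam : 0 ≤ lam) (z : ι → E) :
    Tendsto (thresholdObjective W lam z) (cocompact (ι → E)) atTop :=
  tendsto_atTop_mono (half_dist_sq_le_thresholdObjective hnonneg hlam z)
    (((tendsto_pow_atTop two_ne_zero).comp (tendsto_dist_left_cocompact_atTop z)).const_mul_atTop
      one_half_pos)

theorem thresholdObjective_midpoint_le [InnerProductSpace ℝ E]
    (hsymm : ∀ i j, W i j = W j i) (hnonneg : ∀ i j, 0 ≤ W i j) (hrow : ∀ i, ∑ j, W i j ≤ S)
    (hlam : 0 ≤ lam) (z x y : ι → E) :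
    thresholdObjective W lam z (fun i => midpoint ℝ (x i) (y i))
      ≤ (thresholdObjective W lam z x + thresholdObjective W lam z y) / 2
        - (1 - lam * S) / 8 * ∑ i, ‖x i - y i‖ ^ 2 := by
  have hfid : ∑ i, ‖z i - midpoint ℝ (x i) (y i)‖ ^ 2
      = (∑ i, ‖z i - x i‖ ^ 2 + ∑ i, ‖z i - y i‖ ^ 2) / 2 - (∑ i, ‖x i - y i‖ ^ 2) / 4 := by
    simp only [norm_sub_midpoint_sq, sum_sub_distrib, sum_add_distrib, ← sum_div]
  have hl1 : ∑ i, ‖midpoint ℝ (x i) (y i)‖ ≤ (∑ i, ‖x i‖ + ∑ i, ‖y i‖) / 2 := by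
    rw [← sum_add_distrib, sum_div]
    exact sum_le_sum fun i _ => norm_midpoint_le _ _
  have hquad := sum_sum_mul_norm_midpoint_le hsymm hnonneg hrow x y
  unfold thresholdObjective
  nlinarith [mul_le_mul_of_nonneg_left hl1 hlam, mul_le_mul_of_nonneg_left hquad hlam]

theorem eq_of_forall_thresholdObjective_le [InnerProductSpace ℝ E]
    (hsymm : ∀ i j, W i j = W j i) (hnonneg : ∀ i j, 0 ≤ W i j) (hrow : ∀ i, ∑ j, W i j ≤ S)
    (hlam : 0 ≤ lam) (hS : lam * S < 1) {z x y : ι → E}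
    (hx : ∀ w, thresholdObjective W lam z x ≤ thresholdObjective W lam z w)
    (hy : ∀ w, thresholdObjective W lam z y ≤ thresholdObjective W lam z w) : x = y := by
  have hmid := thresholdObjective_midpoint_le hsymm hnonneg hrow hlam z x y
  have hzero : ∑ i, ‖x i - y i‖ ^ 2 = 0 := by
    refine le_antisymm ?_ (sum_nonneg fun i _ => sq_nonneg _)
    by_contra! hpos
    nlinarith [hx (fun i => midpoint ℝ (x i) (y i)), hx y, hy x,
      mul_pos (sub_pos.2 hS) hpos]
  funext i
  have hi := (sum_eq_zero_iff_of_nonneg (fun i _ => sq_nonneg _)).1 hzero i (mem_univ i)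
  rwa [sq_eq_zero_iff, norm_eq_zero, sub_eq_zero] at hi

end Objective

/-- If λ·(max_i Σ_{j≠i} w_{ij}) < 1, then for every z ∈ ℂⁿ the threshold
T_{λ,W}(z) is well-defined: D_{λ,W}(·;z) attains its minimum over ℂⁿ at a unique point. -/
theorem stmt14 (n : ℕ) (hn : 0 < n) (W : Matrix (Fin n) (Fin n) ℝ)
    (hsymm : ∀ i j, W i j = W j i) (hnonneg : ∀ i j, 0 ≤ W i j)
    (hdiag : ∀ i, W i i = 0) (lam : ℝ) (hlam : 0 < lam)
    (hbound : lam * (Finset.univ.sup'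
        (Finset.univ_nonempty_iff.mpr (Fin.pos_iff_nonempty.mp hn))
        (fun i => ∑ j ∈ Finset.univ.erase i, W i j)) < 1)
    (D : (Fin n → ℂ) → (Fin n → ℂ) → ℝ)
    (hD : D = fun x z => (1 / 2) * ∑ i, ‖z i - x i‖ ^ 2
        + lam * ((∑ i, ‖x i‖)
            + (1 / 2) * ∑ i, ∑ j, W i j * (‖x i‖ * ‖x j‖)))
    (z : Fin n → ℂ) :
    ∃! xhat : Fin n → ℂ, ∀ x : Fin n → ℂ, D xhat z ≤ D x z := by
  have hrow : ∀ i, ∑ j, W i j ≤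
      univ.sup' (univ_nonempty_iff.mpr (Fin.pos_iff_nonempty.mp hn))
        (fun i => ∑ j ∈ univ.erase i, W i j) := fun i => by
    rw [← add_sum_erase _ _ (mem_univ i), hdiag, zero_add]
    exact le_sup' (fun i => ∑ j ∈ univ.erase i, W i j) (mem_univ i)
  have hF : ∀ x, D x z = thresholdObjective W lam z x := fun x => by rw [hD]; rfl
  simp only [hF]
  obtain ⟨xhat, hmin⟩ := (continuous_thresholdObjective W lam z).exists_forall_le
    (tendsto_thresholdObjective_cocompact hnonneg hlam.le z)
  exact ⟨xhat, hmin, fun y hy => eq_of_forall_thresholdObjective_le hsymm hnonneg hrow hlam.le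
    hbound hy hmin⟩
end
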